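/- arXiv:1607.02077 — 2 statements merged into one kernel-verified Lean document; each statement's English description precedes it below -/
import Mathlib

section
/- For all real a > 0 and x ≤ 0, the second Kummer relation holds: ₁F₁(a, 2a+1; x) = 2^{2a−1} Γ(a+1/2) e^{x/2} (−x)^{1/2−a} [ I_{a−1/2}(−x/2) + I_{a+1/2}(−x/2) ], where at x = 0 both sides are interpreted via the limit (both equal 1 after normalization). -/
open Real MeasureTheory intervalIntegral Filter Finset

/-- Pochhammer symbol `(a)_k = a (a+1) ⋯ (a+k-1)`. -/
noncomputable def poch (a : ℝ) (k : ℕ) : ℝ := ∏ i ∈ Finset.range k, (a + i)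

/-- Confluent hypergeometric series `₁F₁(a, b; z)`. -/
noncomputable def F11 (a b z : ℝ) : ℝ :=
  ∑' m : ℕ, poch a m / (poch b m * m.factorial) * z ^ m

/-- Gauss hypergeometric series `₂F₁(a, b, c; z)`. -/
noncomputable def F21 (a b c z : ℝ) : ℝ :=
  ∑' m : ℕ, poch a m * poch b m / (poch c m * m.factorial) * z ^ m

/-- Jacobi polynomial `P_j^{(a,b)}(u)`. -/
noncomputable def jacobiP (a b : ℝ) (j : ℕ) (u : ℝ) : ℝ :=
  poch (a + 1) j / j.factorial * F21 (-(j : ℝ)) ((j : ℝ) + a + b + 1) (a + 1) ((1 - u) / 2)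

/-- Gegenbauer polynomial `C_j^{(ν)}(z)`. -/
noncomputable def gegenbauerC (ν : ℝ) (j : ℕ) (z : ℝ) : ℝ :=
  poch (2 * ν) j / j.factorial * F21 (-(j : ℝ)) ((j : ℝ) + 2 * ν) (ν + 1 / 2) ((1 - z) / 2)

/-- Modified Bessel function of the first kind `I_κ(u)`. -/
noncomputable def besselI (κ u : ℝ) : ℝ :=
  ∑' j : ℕ, (u / 2) ^ ((2 * j : ℝ) + κ) / (Real.Gamma (κ + j + 1) * j.factorial)

/-- Normalized modified Bessel function `i_κ(u) = (2/u)^κ Γ(κ+1) I_κ(u)`, via its power series. -/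
noncomputable def iBessel (κ u : ℝ) : ℝ :=
  ∑' j : ℕ, Real.Gamma (κ + 1) / (Real.Gamma (κ + (j : ℝ) + 1) * j.factorial) * (u / 2) ^ (2 * j)

-- chunk1

lemma poch_zero (a : ℝ) : poch a 0 = 1 := by simp [poch]

lemma poch_succ (a : ℝ) (k : ℕ) : poch a (k+1) = poch a k * (a + k) :=
  Finset.prod_range_succ _ _

lemma poch_pos {a : ℝ} (ha : 0 < a) (k : ℕ) : 0 < poch a k :=
  Finset.prod_pos (fun i _ => by positivity)

/-- ratio of Pochhammers -/
noncomputable def kr (a : ℝ) (k : ℕ) : ℝ := poch a k / poch (2*a+1) k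

lemma kr_zero (a : ℝ) : kr a 0 = 1 := by simp [kr, poch_zero]

lemma kr_succ {a : ℝ} (ha : 0 < a) (k : ℕ) :
    kr a (k+1) * (2*a+1+k) = kr a k * (a + k) := by
  have h1 := (poch_pos (by linarith : (0:ℝ) < 2*a+1) k).ne'
  have h2 : (2*a+1+(k:ℝ)) ≠ 0 := by positivity
  rw [kr, kr, poch_succ, poch_succ]
  field_simp

noncomputable def kt (a : ℝ) (m k : ℕ) : ℝ := (m.choose k : ℝ) * (-2)^k * kr a k

noncomputable def kf (a : ℝ) (m : ℕ) : ℝ := ∑ k ∈ range (m+1), kt a m k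

noncomputable def kD (a : ℝ) (m : ℕ) : ℝ :=
  ∑ k ∈ range (m+1), (m.choose k : ℝ) * (-2)^(k+1) * kr a (k+1)

lemma kt_zero (a : ℝ) (m : ℕ) : kt a m 0 = 1 := by simp [kt, kr_zero]

lemma kf_succ (a : ℝ) (m : ℕ) : kf a (m+1) = kf a m + kD a m := by
  have hA : ∑ k ∈ range (m+1), kt a m (k+1) = kf a m - 1 := by
    have h := Finset.sum_range_succ' (kt a m) (m+1)
    have h' : ∑ k ∈ range (m+1+1), kt a m k = kf a m := by
      rw [Finset.sum_range_succ]
      have hz : kt a m (m+1) = 0 := by simp [kt, Nat.choose_succ_self]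
      rw [hz, add_zero]; rfl
    rw [kt_zero] at h
    rw [h] at h'
    linarith
  have h1 : ∀ k ∈ range (m+1), kt a (m+1) (k+1)
      = kt a m (k+1) + (m.choose k : ℝ) * (-2)^(k+1) * kr a (k+1) := by
    intro k _
    simp only [kt, Nat.choose_succ_succ, Nat.cast_add]
    ring
  have h2 : kf a (m+1) = (∑ k ∈ range (m+1), kt a (m+1) (k+1)) + kt a (m+1) 0 :=
    Finset.sum_range_succ' _ _
  rw [h2, Finset.sum_congr rfl h1, Finset.sum_add_distrib, hA, kt_zero]
  simp only [kD]
  ring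

lemma wsum {a : ℝ} (ha : 0 < a) (m : ℕ) :
    ∑ k ∈ range (m+1), (m.choose k : ℝ) * (-2)^(k+1) * kr a (k+1) * (2*a+1+k)
      = -2*a * kf a m - 2 * ∑ k ∈ range (m+1), (k:ℝ) * kt a m k := by
  have h : ∀ k ∈ range (m+1), (m.choose k : ℝ) * (-2)^(k+1) * kr a (k+1) * (2*a+1+k)
      = -2*a * kt a m k + (-2) * ((k:ℝ) * kt a m k) := by
    intro k _
    have hk := kr_succ ha k
    calc (m.choose k : ℝ) * (-2)^(k+1) * kr a (k+1) * (2*a+1+k)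
        = (m.choose k : ℝ) * (-2)^(k+1) * (kr a (k+1) * (2*a+1+k)) := by ring
      _ = (m.choose k : ℝ) * (-2)^(k+1) * (kr a k * (a+k)) := by rw [hk]
      _ = -2*a * kt a m k + (-2) * ((k:ℝ) * kt a m k) := by
          simp only [kt, pow_succ]
          ring
  rw [Finset.sum_congr rfl h, Finset.sum_add_distrib, ← Finset.mul_sum, ← Finset.mul_sum]
  rw [kf]
  ring

lemma ksum (a : ℝ) (n : ℕ) :
    ∑ k ∈ range (n+2), (k:ℝ) * kt a (n+1) k = ((n:ℝ)+1) * kD a n := by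
  have h2 := Finset.sum_range_succ' (fun k => (k:ℝ) * kt a (n+1) k) (n+1)
  have h3 : ∀ k ∈ range (n+1), ((k+1 : ℕ):ℝ) * kt a (n+1) (k+1)
      = ((n:ℝ)+1) * ((n.choose k : ℝ) * (-2)^(k+1) * kr a (k+1)) := by
    intro k _
    have hcast : ((n:ℝ)+1) * (n.choose k : ℝ) = ((n+1).choose (k+1) : ℝ) * ((k:ℝ)+1) := by
      exact_mod_cast congrArg (Nat.cast : ℕ → ℝ) (Nat.add_one_mul_choose_eq n k)
    simp only [kt]
    push_cast
    linear_combination (2*(-2:ℝ)^k * kr a (k+1)) * hcast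
  rw [h2, Finset.sum_congr rfl h3, ← Finset.mul_sum]
  simp only [kD]
  push_cast
  ring
lemma choose_id (n k : ℕ) :
    (n+1) * (n.choose k) + k * ((n+1).choose k) = (n+1) * ((n+1).choose k) := by
  cases k with
  | zero => simp
  | succ j =>
    have h := Nat.add_one_mul_choose_eq n j
    have h' : (j+1) * ((n+1).choose (j+1)) = (n+1) * n.choose j := by
      rw [mul_comm]; exact h.symm
    rw [h', Nat.choose_succ_succ n j, Nat.mul_add]
    exact add_comm _ _

lemma wsum2 {a : ℝ} (n : ℕ) :
    ∑ k ∈ range (n+2), ((n+1).choose k : ℝ) * (-2)^(k+1) * kr a (k+1) * (2*a+1+k)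
      = (2*a+2+n) * kD a (n+1) - ((n:ℝ)+1) * kD a n := by
  have h : ∀ k ∈ range (n+2), ((n+1).choose k : ℝ) * (-2)^(k+1) * kr a (k+1) * (2*a+1+k)
      = (2*a+2+n) * (((n+1).choose k : ℝ) * (-2)^(k+1) * kr a (k+1))
        - ((n:ℝ)+1) * ((n.choose k : ℝ) * (-2)^(k+1) * kr a (k+1)) := by
    intro k _
    have hc : ((n:ℝ)+1) * (n.choose k : ℝ) + (k:ℝ) * ((n+1).choose k : ℝ)
        = ((n:ℝ)+1) * ((n+1).choose k : ℝ) := by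
      exact_mod_cast congrArg (Nat.cast : ℕ → ℝ) (choose_id n k)
    linear_combination ((-2:ℝ)^(k+1) * kr a (k+1)) * hc
  rw [Finset.sum_congr rfl h, Finset.sum_sub_distrib, ← Finset.mul_sum, ← Finset.mul_sum]
  have e1 : ∑ k ∈ range (n+2), ((n+1).choose k : ℝ) * (-2)^(k+1) * kr a (k+1) = kD a (n+1) := rfl
  have e2 : ∑ k ∈ range (n+2), ((n.choose k : ℝ)) * (-2)^(k+1) * kr a (k+1) = kD a n := by
    rw [Finset.sum_range_succ]
    simp [kD, Nat.choose_succ_self]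
  rw [e1, e2]

lemma kf_rec {a : ℝ} (ha : 0 < a) (n : ℕ) :
    (2*a+2+n) * kf a (n+2) = kf a (n+1) + ((n:ℝ)+1) * kf a n := by
  have hw := wsum ha (n+1)
  have h2 := wsum2 (a := a) n
  have h3 := ksum a n
  have e1 := kf_succ a (n+1)
  have e2 := kf_succ a n
  -- hw is over range (n+1+1) = range (n+2) with m = n+1
  have key : (2*a+2+(n:ℝ)) * kD a (n+1) = -2*a*kf a (n+1) - ((n:ℝ)+1) * kD a n := by
    have hw' : ∑ k ∈ range (n+2), ((n+1).choose k : ℝ) * (-2)^(k+1) * kr a (k+1) * (2*a+1+k)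
        = -2*a * kf a (n+1) - 2 * (((n:ℝ)+1) * kD a n) := by
      rw [← h3]; exact hw
    linarith [h2.symm.trans hw']
  nlinarith [key, e1, e2]
noncomputable def kc (a : ℝ) (m : ℕ) : ℝ :=
  (if m % 2 = 1 then (2:ℝ)⁻¹ else 1) * m.factorial
    / (4 ^ (m/2) * poch (a+1/2) ((m+1)/2) * (m/2).factorial)

lemma kc_even (a : ℝ) (j : ℕ) :
    kc a (2*j) = (2*j).factorial / (4 ^ j * poch (a+1/2) j * j.factorial) := by
  have h1 : (2*j) % 2 = 0 := by omega
  have h2 : (2*j) / 2 = j := by omega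
  have h3 : (2*j+1) / 2 = j := by omega
  simp [kc, h1, h2, h3]

lemma kc_odd (a : ℝ) (j : ℕ) :
    kc a (2*j+1) = (2:ℝ)⁻¹ * (2*j+1).factorial / (4 ^ j * poch (a+1/2) (j+1) * j.factorial) := by
  have h1 : (2*j+1) % 2 = 1 := by omega
  have h2 : (2*j+1) / 2 = j := by omega
  have h3 : (2*j+1+1) / 2 = j+1 := by omega
  simp [kc, h1, h2, h3]

lemma kc_rec {a : ℝ} (ha : 0 < a) (n : ℕ) :
    (2*a+2+n) * kc a (n+2) = kc a (n+1) + ((n:ℝ)+1) * kc a n := by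
  have hpa : (0:ℝ) < a + 1/2 := by linarith
  rcases Nat.even_or_odd n with ⟨j, hj⟩ | ⟨j, hj⟩
  · -- n = 2j : (2a+2+2j) kc(2j+2) = kc(2j+1) + (2j+1) kc(2j)
    subst hj
    have hn2 : j + j + 2 = 2*(j+1) := by ring
    have hn1 : j + j + 1 = 2*j+1 := by ring
    have hn0 : j + j = 2*j := by ring
    rw [hn2, hn1, hn0, kc_even, kc_odd, kc_even]
    have hP := (poch_pos hpa j).ne'
    have hP1 := (poch_pos hpa (j+1)).ne'
    have hfj : ((j.factorial : ℝ)) ≠ 0 := by exact_mod_cast j.factorial_ne_zero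
    have hfj1 : (((j+1).factorial : ℝ)) ≠ 0 := by exact_mod_cast (j+1).factorial_ne_zero
    have h4 : ((4:ℝ))^j ≠ 0 := by positivity
    have hps : poch (a+1/2) (j+1) = poch (a+1/2) j * (a+1/2+j) := poch_succ _ j
    have hf1 : ((2*(j+1)).factorial : ℝ) = (2*j+2) * (2*j+1) * (2*j).factorial := by
      have : 2*(j+1) = (2*j+1)+1 := by ring
      rw [this, Nat.factorial_succ, Nat.factorial_succ]
      push_cast; ring
    have hf2 : (((2*j+1)).factorial : ℝ) = (2*j+1) * (2*j).factorial := by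
      rw [Nat.factorial_succ]; push_cast; ring
    have hf3 : (((j+1)).factorial : ℝ) = (j+1) * j.factorial := by
      rw [Nat.factorial_succ]; push_cast; ring
    rw [hps, hf1, hf2, hf3]
    have hQ : (a+1/2+(j:ℝ)) ≠ 0 := by positivity
    have hj1 : ((j:ℝ)+1) ≠ 0 := by positivity
    have h4' : ((4:ℝ))^(j+1) ≠ 0 := by positivity
    have hfc : ((2*j).factorial : ℝ) ≠ 0 := by exact_mod_cast (2*j).factorial_ne_zero
    have hsub : (2*a+2+((2*j:ℕ):ℝ)) = 2*(a+1/2)+1+2*(j:ℝ) := by push_cast; ring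
    have hPpos := poch_pos hpa j
    rw [hsub]
    generalize (a + 1/2) = u at hpa hQ hPpos ⊢
    have hfp : (0:ℝ) < j.factorial := by exact_mod_cast j.factorial_pos
    have h4p : (0:ℝ) < 4^j := by positivity
    have hujp : (0:ℝ) < u + (j:ℝ) := add_pos_of_pos_of_nonneg hpa (Nat.cast_nonneg j)
    have hj1p : (0:ℝ) < (j:ℝ) + 1 := by positivity
    have hD1 : ((4:ℝ)^j * (poch u j * (u+(j:ℝ))) * j.factorial) ≠ 0 :=
      (mul_pos (mul_pos h4p (mul_pos hPpos hujp)) hfp).ne'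
    have hD2 : ((4:ℝ)^j * poch u j * (j.factorial:ℝ)) ≠ 0 :=
      (mul_pos (mul_pos h4p hPpos) hfp).ne'
    have hDL : ((4:ℝ)^(j+1) * (poch u j * (u+(j:ℝ))) * (((j:ℝ)+1) * j.factorial)) ≠ 0 :=
      (mul_pos (mul_pos (by positivity) (mul_pos hPpos hujp)) (mul_pos hj1p hfp)).ne'
    simp only [← mul_div_assoc]
    rw [div_add_div _ _ hD1 hD2, div_eq_div_iff hDL (mul_ne_zero hD1 hD2)]
    push_cast
    ring
  · -- n = 2j+1 : (2a+3+2j) kc(2j+3) = kc(2j+2) + (2j+2) kc(2j+1)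
    subst hj
    have hn2 : 2*j + 1 + 2 = 2*(j+1)+1 := by ring
    have hn1 : 2*j + 1 + 1 = 2*(j+1) := by ring
    rw [hn2, hn1, kc_odd, kc_even, kc_odd]
    have hP := (poch_pos hpa (j+1)).ne'
    have hP1 := (poch_pos hpa (j+2)).ne'
    have hfj : ((j.factorial : ℝ)) ≠ 0 := by exact_mod_cast j.factorial_ne_zero
    have hfj1 : (((j+1).factorial : ℝ)) ≠ 0 := by exact_mod_cast (j+1).factorial_ne_zero
    have h4 : ((4:ℝ))^j ≠ 0 := by positivity
    have hps : poch (a+1/2) (j+2) = poch (a+1/2) (j+1) * (a+1/2+(j+1)) := by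
      have := poch_succ (a+1/2) (j+1)
      rw [this]; push_cast; ring
    have hf1 : ((2*(j+1)+1).factorial : ℝ) = (2*j+3) * (2*j+2) * (2*j+1).factorial := by
      have : 2*(j+1)+1 = (2*j+2)+1 := by ring
      rw [this, Nat.factorial_succ, Nat.factorial_succ]
      push_cast; ring
    have hf2 : ((2*(j+1)).factorial : ℝ) = (2*j+2) * (2*j+1).factorial := by
      have : 2*(j+1) = (2*j+1)+1 := by ring
      rw [this, Nat.factorial_succ]; push_cast; ring
    have hf3 : (((j+1)).factorial : ℝ) = (j+1) * j.factorial := by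
      rw [Nat.factorial_succ]; push_cast; ring
    rw [hps, hf1, hf2, hf3]
    have hfc : ((2*j+1).factorial : ℝ) ≠ 0 := by exact_mod_cast (2*j+1).factorial_ne_zero
    have hQ : (a+1/2+((j:ℝ)+1)) ≠ 0 := by positivity
    have hj1 : ((j:ℝ)+1) ≠ 0 := by positivity
    have h4' : ((4:ℝ))^(j+1) ≠ 0 := by positivity
    have hsub : (2*a+2+((2*j+1:ℕ):ℝ)) = 2*(a+1/2)+2+2*(j:ℝ) := by push_cast; ring
    have hPpos := poch_pos hpa (j+1)
    rw [hsub]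
    generalize (a + 1/2) = u at hpa hQ hPpos ⊢
    have hfp : (0:ℝ) < j.factorial := by exact_mod_cast j.factorial_pos
    have h4p : (0:ℝ) < 4^j := by positivity
    have hujp : (0:ℝ) < u + ((j:ℝ)+1) := add_pos_of_pos_of_nonneg hpa (by positivity)
    have hj1p : (0:ℝ) < (j:ℝ) + 1 := by positivity
    have hD1 : ((4:ℝ)^(j+1) * poch u (j+1) * (((j:ℝ)+1) * j.factorial)) ≠ 0 :=
      (mul_pos (mul_pos (by positivity) hPpos) (mul_pos hj1p hfp)).ne'
    have hD2 : ((4:ℝ)^j * poch u (j+1) * (j.factorial:ℝ)) ≠ 0 :=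
      (mul_pos (mul_pos h4p hPpos) hfp).ne'
    have hDL : ((4:ℝ)^(j+1) * (poch u (j+1) * (u+((j:ℝ)+1))) * (((j:ℝ)+1) * j.factorial)) ≠ 0 :=
      (mul_pos (mul_pos (by positivity) (mul_pos hPpos hujp)) (mul_pos hj1p hfp)).ne'
    simp only [← mul_div_assoc]
    rw [div_add_div _ _ hD1 hD2, div_eq_div_iff hDL (mul_ne_zero hD1 hD2)]
    push_cast
    ring

lemma kf_eq_kc {a : ℝ} (ha : 0 < a) (m : ℕ) : kf a m = kc a m := by
  induction m using Nat.twoStepInduction with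
  | zero =>
    have h1 : kf a 0 = 1 := by simp [kf, kt_zero]
    have h2 : kc a 0 = 1 := by
      have := kc_even a 0
      simpa [poch_zero] using this
    rw [h1, h2]
  | one =>
    have h1 : kf a 1 = 1 - 2*a/(2*a+1) := by
      simp [kf, Finset.sum_range_succ, kt, kr, poch_succ, poch_zero]
      ring
    have h2 : kc a 1 = (2:ℝ)⁻¹ / (a+1/2) := by
      have := kc_odd a 0
      simpa [poch_succ, poch_zero] using this
    rw [h1, h2]
    have hne : (2*a+1) ≠ 0 := by positivity
    have hne2 : (a+1/2) ≠ 0 := by positivity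
    field_simp
    ring
  | more n ih1 ih2 =>
    have hf := kf_rec ha n
    have hc := kc_rec ha n
    have hne : (2*a+2+(n:ℝ)) ≠ 0 := by positivity
    have : (2*a+2+(n:ℝ)) * kf a (n+2) = (2*a+2+(n:ℝ)) * kc a (n+2) := by
      rw [hf, hc, ih1, ih2]
    exact mul_left_cancel₀ hne this
lemma Gamma_poch {s : ℝ} (hs : 0 < s) (j : ℕ) :
    Real.Gamma (s + j) = Real.Gamma s * poch s j := by
  induction j with
  | zero => simp [poch_zero]
  | succ n ih =>
    have h1 : s + ((n+1:ℕ):ℝ) = (s + n) + 1 := by push_cast; ring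
    have h2 : s + (n:ℝ) ≠ 0 := (add_pos_of_pos_of_nonneg hs (Nat.cast_nonneg n)).ne'
    rw [h1, Real.Gamma_add_one h2, ih, poch_succ]
    ring

lemma cauchy_coef {a : ℝ} (x : ℝ) (ha : 0 < a) (n : ℕ) :
    ∑ k ∈ range (n+1),
      (poch a k / (poch (2*a+1) k * k.factorial) * x^k) * ((-x/2)^(n-k) / (n-k).factorial)
      = kc a n * (-x/2)^n / n.factorial := by
  have key : ∀ k ∈ range (n+1),
      (poch a k / (poch (2*a+1) k * k.factorial) * x^k) * ((-x/2)^(n-k) / (n-k).factorial)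
        = kt a n k * (-x/2)^n / n.factorial := by
    intro k hk
    have hkn : k ≤ n := Nat.lt_succ_iff.mp (Finset.mem_range.mp hk)
    have hch : ((n.choose k : ℝ)) * k.factorial * (n-k).factorial = n.factorial := by
      exact_mod_cast congrArg (Nat.cast : ℕ → ℝ) (Nat.choose_mul_factorial_mul_factorial hkn)
    have hpow : (-x/2)^n = (-x/2)^k * (-x/2)^(n-k) := by
      rw [← pow_add, Nat.add_sub_cancel' hkn]
    have hxk : x^k = (-2:ℝ)^k * (-x/2)^k := by
      rw [← mul_pow]; congr 1; ring
    have hfk : ((k.factorial:ℝ)) ≠ 0 := by exact_mod_cast k.factorial_ne_zero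
    have hfnk : (((n-k).factorial:ℝ)) ≠ 0 := by exact_mod_cast (n-k).factorial_ne_zero
    have hC : ((n.choose k : ℝ)) ≠ 0 := by exact_mod_cast (Nat.choose_pos hkn).ne'
    have hpoch : poch (2*a+1) k ≠ 0 := (poch_pos (by linarith) k).ne'
    simp only [kt, kr]
    rw [hpow, hxk, ← hch]
    field_simp
  rw [Finset.sum_congr rfl key, ← Finset.sum_div, ← Finset.sum_mul]
  rw [show (∑ k ∈ range (n+1), kt a n k) = kf a n from rfl, kf_eq_kc ha n]

lemma hsumA {a : ℝ} (x : ℝ) (ha : 0 < a) :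
    Summable (fun m : ℕ => ‖poch a m / (poch (2*a+1) m * m.factorial) * x^m‖) := by
  apply Summable.of_nonneg_of_le (fun _ => norm_nonneg _) _
    (Real.summable_pow_div_factorial |x|)
  intro m
  have h1 : 0 < poch (2*a+1) m := poch_pos (by linarith) m
  have h2 : 0 < poch a m := poch_pos ha m
  have h3 : poch a m ≤ poch (2*a+1) m := by
    apply Finset.prod_le_prod (fun i _ => by positivity)
    intro i _
    linarith
  have hfm : (0:ℝ) < m.factorial := by exact_mod_cast m.factorial_pos
  have hA : (0:ℝ) < poch a m / (poch (2*a+1) m * m.factorial) := by positivity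
  rw [norm_mul, norm_pow, Real.norm_eq_abs, Real.norm_eq_abs, abs_of_pos hA]
  have hle : poch a m / (poch (2*a+1) m * m.factorial) ≤ 1 / m.factorial := by
    rw [div_le_div_iff₀ (by positivity) hfm]
    calc poch a m * m.factorial ≤ poch (2*a+1) m * m.factorial := by
          apply mul_le_mul_of_nonneg_right h3 hfm.le
      _ = 1 * (poch (2*a+1) m * ↑m.factorial) := by ring
  calc poch a m / (poch (2*a+1) m * m.factorial) * |x|^m
      ≤ 1 / m.factorial * |x|^m := by
        apply mul_le_mul_of_nonneg_right hle (by positivity)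
    _ = |x|^m / m.factorial := by ring

lemma hsumE (x : ℝ) : Summable (fun n : ℕ => ‖(-x/2)^n / n.factorial‖) := by
  apply (Real.summable_pow_div_factorial |(-x/2)|).congr
  intro n
  rw [norm_div, norm_pow, Real.norm_eq_abs, Real.norm_eq_abs, Nat.abs_cast]

lemma main2 {a : ℝ} (x : ℝ) (ha : 0 < a) :
    F11 a (2*a+1) x * (∑' n:ℕ, (-x/2)^n / n.factorial)
      = ∑' n:ℕ, kc a n * (-x/2)^n / n.factorial := by
  have h := tsum_mul_tsum_eq_tsum_sum_antidiagonal_of_summable_norm (hsumA x ha) (hsumE x)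
  rw [F11, h]
  apply tsum_congr
  intro n
  rw [Finset.Nat.sum_antidiagonal_eq_sum_range_succ_mk]
  exact cauchy_coef x ha n

lemma main2sum {a : ℝ} (x : ℝ) (ha : 0 < a) :
    Summable (fun n : ℕ => kc a n * (-x/2)^n / n.factorial) := by
  apply Summable.of_norm
  apply (summable_norm_sum_mul_antidiagonal_of_summable_norm (hsumA x ha) (hsumE x)).congr
  intro n
  rw [Finset.Nat.sum_antidiagonal_eq_sum_range_succ_mk, cauchy_coef x ha n]
lemma bessel_const {a x : ℝ} (ha : 0 < a) (hx : x < 0) :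
    (2:ℝ)^(2*a-1) * (-x)^(1/2-a) * (-x/4)^(a-1/2) = 1 := by
  have hX : (0:ℝ) < -x := by linarith
  have h4 : (-x/4 : ℝ) = (-x)/4 := rfl
  rw [h4, Real.div_rpow hX.le (by norm_num : (0:ℝ) ≤ 4)]
  have h2 : (-x)^(1/2-a) * (-x)^(a-1/2) = 1 := by
    rw [← Real.rpow_add hX]
    norm_num
  have h3 : (4:ℝ)^(a-1/2) = 2^(2*a-1) := by
    have h40 : (4:ℝ) = 2^(2:ℝ) := by
      rw [show ((2:ℝ):ℝ) = ((2:ℕ):ℝ) by norm_num, Real.rpow_natCast]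
      norm_num
    rw [h40, ← Real.rpow_mul (by norm_num : (0:ℝ) ≤ 2)]
    norm_num
    ring_nf
  have h4ne : ((2:ℝ)^(2*a-1)) ≠ 0 := (Real.rpow_pos_of_pos two_pos _).ne'
  calc (2:ℝ)^(2*a-1) * (-x)^(1/2-a) * ((-x)^(a-1/2) / 4^(a-1/2))
      = ((-x)^(1/2-a) * (-x)^(a-1/2)) * ((2:ℝ)^(2*a-1) / 4^(a-1/2)) := by ring
    _ = 1 := by rw [h2, h3, one_mul, div_self h4ne]

lemma bessel_even {a x : ℝ} (ha : 0 < a) (hx : x < 0) :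
    (2:ℝ)^(2*a-1) * Real.Gamma (a+1/2) * (-x)^(1/2-a) * besselI (a-1/2) (-x/2)
      = ∑' j:ℕ, kc a (2*j) * (-x/2)^(2*j) / (2*j).factorial := by
  have hX : (0:ℝ) < -x := by linarith
  have hy : (0:ℝ) < -x/4 := by linarith
  have hpa : (0:ℝ) < a+1/2 := by linarith
  have hG : (0:ℝ) < Real.Gamma (a+1/2) := Real.Gamma_pos_of_pos hpa
  have h1 : ∀ j:ℕ, (-x/2/2) ^ (2*(j:ℝ) + (a-1/2)) / (Real.Gamma ((a-1/2) + j + 1) * j.factorial)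
      = (-x/4)^(a-1/2) * ((Real.Gamma (a+1/2))⁻¹ * ((x^2/16)^j / (poch (a+1/2) j * j.factorial))) := by
    intro j
    have hb : (-x/2/2 : ℝ) = -x/4 := by ring
    have hg : (a-1/2) + (j:ℝ) + 1 = (a+1/2) + (j:ℕ) := by push_cast; ring
    have hcast : (2*(j:ℝ)) = ((2*j : ℕ):ℝ) := by push_cast; ring
    rw [hb, hg, Gamma_poch hpa j, Real.rpow_add hy, hcast, Real.rpow_natCast]
    have hqq : (-x/4)^(2*j) = (x^2/16)^j := by
      rw [pow_mul]; congr 1; ring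
    rw [hqq]
    have hP := (poch_pos hpa j).ne'
    have hfj : ((j.factorial:ℝ)) ≠ 0 := by exact_mod_cast j.factorial_ne_zero
    field_simp
  rw [besselI, tsum_congr h1, tsum_mul_left, tsum_mul_left]
  have hR : ∀ j:ℕ, kc a (2*j) * (-x/2)^(2*j) / (2*j).factorial
      = (x^2/16)^j / (poch (a+1/2) j * j.factorial) := by
    intro j
    rw [kc_even]
    have hfact : ((2*j).factorial : ℝ) ≠ 0 := by exact_mod_cast (2*j).factorial_ne_zero
    have h2 : (-x/2)^(2*j) = (x^2/16)^j * 4^j := by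
      rw [pow_mul, ← mul_pow]; congr 1; ring
    rw [h2]
    have hP := (poch_pos hpa j).ne'
    have hfj : ((j.factorial:ℝ)) ≠ 0 := by exact_mod_cast j.factorial_ne_zero
    have h4j : ((4:ℝ))^j ≠ 0 := by positivity
    generalize ((x^2/16 : ℝ))^j = w
    generalize hq : ((4:ℝ))^j = q at h4j ⊢
    generalize hF : (((2*j).factorial : ℕ) : ℝ) = F at hfact ⊢
    rw [div_mul_eq_mul_div, div_div,
      div_eq_div_iff (mul_ne_zero (mul_ne_zero (mul_ne_zero h4j hP) hfj) hfact)
        (mul_ne_zero hP hfj)]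
    ring
  rw [tsum_congr hR]
  have := bessel_const ha hx
  calc (2:ℝ)^(2*a-1) * Real.Gamma (a+1/2) * (-x)^(1/2-a) *
        ((-x/4)^(a-1/2) * ((Real.Gamma (a+1/2))⁻¹ * ∑' j:ℕ, (x^2/16)^j / (poch (a+1/2) j * j.factorial)))
      = ((2:ℝ)^(2*a-1) * (-x)^(1/2-a) * (-x/4)^(a-1/2)) *
          (Real.Gamma (a+1/2) * (Real.Gamma (a+1/2))⁻¹) *
          (∑' j:ℕ, (x^2/16)^j / (poch (a+1/2) j * j.factorial)) := by ring
    _ = ∑' j:ℕ, (x^2/16)^j / (poch (a+1/2) j * j.factorial) := by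
        rw [this, mul_inv_cancel₀ hG.ne']
        ring
lemma bessel_odd {a x : ℝ} (ha : 0 < a) (hx : x < 0) :
    (2:ℝ)^(2*a-1) * Real.Gamma (a+1/2) * (-x)^(1/2-a) * besselI (a+1/2) (-x/2)
      = ∑' j:ℕ, kc a (2*j+1) * (-x/2)^(2*j+1) / (2*j+1).factorial := by
  have hX : (0:ℝ) < -x := by linarith
  have hy : (0:ℝ) < -x/4 := by linarith
  have hpa : (0:ℝ) < a+1/2 := by linarith
  have hG : (0:ℝ) < Real.Gamma (a+1/2) := Real.Gamma_pos_of_pos hpa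
  have h1 : ∀ j:ℕ, (-x/2/2) ^ (2*(j:ℝ) + (a+1/2)) / (Real.Gamma ((a+1/2) + j + 1) * j.factorial)
      = (-x/4)^(a-1/2) * ((Real.Gamma (a+1/2))⁻¹ *
          ((-x/4) * (x^2/16)^j / (poch (a+1/2) (j+1) * j.factorial))) := by
    intro j
    have hb : (-x/2/2 : ℝ) = -x/4 := by ring
    have hg : (a+1/2) + (j:ℝ) + 1 = (a+1/2) + ((j+1:ℕ):ℝ) := by push_cast; ring
    have hcast : (2*(j:ℝ)) + (a+1/2) = ((2*j+1 : ℕ):ℝ) + (a-1/2) := by push_cast; ring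
    rw [hb, hg, Gamma_poch hpa (j+1), hcast, Real.rpow_add hy, Real.rpow_natCast]
    have hsq : ((-x/4:ℝ))^2 = x^2/16 := by ring
    have hqq : (-x/4:ℝ)^(2*j+1) = (x^2/16)^j * (-x/4) := by
      rw [pow_succ, pow_mul, hsq]
    rw [hqq]
    have hP := (poch_pos hpa (j+1)).ne'
    have hfj : ((j.factorial:ℝ)) ≠ 0 := by exact_mod_cast j.factorial_ne_zero
    field_simp
  rw [besselI, tsum_congr h1, tsum_mul_left, tsum_mul_left]
  have hR : ∀ j:ℕ, kc a (2*j+1) * (-x/2)^(2*j+1) / (2*j+1).factorial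
      = (-x/4) * (x^2/16)^j / (poch (a+1/2) (j+1) * j.factorial) := by
    intro j
    rw [kc_odd]
    have hfact : ((2*j+1).factorial : ℝ) ≠ 0 := by exact_mod_cast (2*j+1).factorial_ne_zero
    have h2 : (-x/2)^(2*j+1) = (-x/2) * ((x^2/16)^j * 4^j) := by
      rw [pow_succ, pow_mul, show ((-x/2:ℝ))^2 = (x^2/16)*4 from by ring, mul_pow]
      ring
    rw [h2]
    have hP := (poch_pos hpa (j+1)).ne'
    have hfj : ((j.factorial:ℝ)) ≠ 0 := by exact_mod_cast j.factorial_ne_zero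
    have h4j : ((4:ℝ))^j ≠ 0 := by positivity
    generalize ((x^2/16 : ℝ))^j = w
    generalize hq : ((4:ℝ))^j = q at h4j ⊢
    generalize hF : (((2*j+1).factorial : ℕ) : ℝ) = F at hfact ⊢
    rw [div_mul_eq_mul_div, div_div,
      div_eq_div_iff (mul_ne_zero (mul_ne_zero (mul_ne_zero h4j hP) hfj) hfact)
        (mul_ne_zero hP hfj)]
    ring
  rw [tsum_congr hR]
  have hc := bessel_const ha hx
  calc (2:ℝ)^(2*a-1) * Real.Gamma (a+1/2) * (-x)^(1/2-a) *
        ((-x/4)^(a-1/2) * ((Real.Gamma (a+1/2))⁻¹ *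
          ∑' j:ℕ, (-x/4) * (x^2/16)^j / (poch (a+1/2) (j+1) * j.factorial)))
      = ((2:ℝ)^(2*a-1) * (-x)^(1/2-a) * (-x/4)^(a-1/2)) *
          (Real.Gamma (a+1/2) * (Real.Gamma (a+1/2))⁻¹) *
          (∑' j:ℕ, (-x/4) * (x^2/16)^j / (poch (a+1/2) (j+1) * j.factorial)) := by ring
    _ = ∑' j:ℕ, (-x/4) * (x^2/16)^j / (poch (a+1/2) (j+1) * j.factorial) := by
        rw [hc, mul_inv_cancel₀ hG.ne']
        ring

set_option maxHeartbeats 1000000 in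
theorem kummer_second_relation (a x : ℝ) (ha : 0 < a) (hx : x < 0) :
    F11 a (2 * a + 1) x =
      (2 : ℝ) ^ (2 * a - 1) * Real.Gamma (a + 1/2) * Real.exp (x / 2) *
        (-x) ^ (1/2 - a) *
          (besselI (a - 1/2) (-x / 2) + besselI (a + 1/2) (-x / 2)) := by
  have hB : Summable (fun n : ℕ => kc a n * (-x/2)^n / n.factorial) := main2sum x ha
  have hinj2 : Function.Injective (fun k : ℕ => 2*k) := fun p q h => by
    have : 2*p = 2*q := h
    omega
  have hinj2' : Function.Injective (fun k : ℕ => 2*k+1) := fun p q h => by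
    have : 2*p+1 = 2*q+1 := h
    omega
  have hBe : Summable (fun k : ℕ => kc a (2*k) * (-x/2)^(2*k) / (2*k).factorial) :=
    hB.comp_injective hinj2
  have hBo : Summable (fun k : ℕ => kc a (2*k+1) * (-x/2)^(2*k+1) / (2*k+1).factorial) :=
    hB.comp_injective hinj2'
  have hsplit : (∑' k:ℕ, kc a (2*k) * (-x/2)^(2*k) / (2*k).factorial)
      + (∑' k:ℕ, kc a (2*k+1) * (-x/2)^(2*k+1) / (2*k+1).factorial)
      = ∑' n:ℕ, kc a n * (-x/2)^n / n.factorial :=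
    tsum_even_add_odd (f := fun n : ℕ => kc a n * (-x/2)^n / n.factorial) hBe hBo
  have he := bessel_even ha hx
  have ho := bessel_odd ha hx
  have hm := main2 x ha
  have hT : (∑' n:ℕ, (-x/2)^n / (n.factorial:ℝ)) = Real.exp (-x/2) := by
    rw [Real.exp_eq_exp_ℝ, NormedSpace.exp_eq_tsum_div]
  have hexp : Real.exp (x/2) * Real.exp (-x/2) = 1 := by
    rw [← Real.exp_add, show x/2 + -x/2 = 0 from by ring, Real.exp_zero]
  calc F11 a (2*a+1) x
      = F11 a (2*a+1) x * (Real.exp (x/2) * Real.exp (-x/2)) := by rw [hexp, mul_one]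
    _ = Real.exp (x/2) * (F11 a (2*a+1) x * (∑' n:ℕ, (-x/2)^n / n.factorial)) := by
        rw [hT]; ring
    _ = Real.exp (x/2) * ((∑' k:ℕ, kc a (2*k) * (-x/2)^(2*k) / (2*k).factorial)
          + ∑' k:ℕ, kc a (2*k+1) * (-x/2)^(2*k+1) / (2*k+1).factorial) := by
        rw [hm, ← hsplit]
    _ = Real.exp (x/2) * ((2:ℝ)^(2*a-1) * Real.Gamma (a+1/2) * (-x)^(1/2-a) * besselI (a-1/2) (-x/2)
          + (2:ℝ)^(2*a-1) * Real.Gamma (a+1/2) * (-x)^(1/2-a) * besselI (a+1/2) (-x/2)) := by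
        rw [he, ho]
    _ = (2 : ℝ) ^ (2 * a - 1) * Real.Gamma (a + 1/2) * Real.exp (x / 2) *
        (-x) ^ (1/2 - a) *
          (besselI (a - 1/2) (-x / 2) + besselI (a + 1/2) (-x / 2)) := by ring
end

section
/- For ν ∈ (1/4, 1/2], c ∈ (0,1), and v > 0: ∫_{−1}^{1} ₁F₁(2, 2ν+3/2; v(1−cu)/2) dμ^{ν+1/2}(u) = (Γ(2ν+3/2)/Γ(2ν−1/2)) · ∫₀¹ e^{vy/2} i_ν(vcy/2) · y (1−y)^{2ν−3/2} dy, where μ^{ν+1/2} is the symmetric Beta distribution with density (Γ(ν+1)/(√π Γ(ν+1/2)))(1−u²)^{ν−1/2} on [−1,1]. -/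
open Real MeasureTheory intervalIntegral Filter Finset

open Set

set_option maxHeartbeats 2000000

open Real MeasureTheory intervalIntegral Filter Finset Set



lemma poch_two (m : ℕ) : poch 2 m = (m + 1).factorial := by
  induction m with
  | zero => simp [poch]
  | succ n ih =>
    rw [poch, Finset.prod_range_succ, ← poch, ih, show n+1+1 = (n+1)+1 from rfl,
      Nat.factorial_succ (n+1)]
    push_cast
    ring

lemma Gamma_mul_poch {a : ℝ} (ha : 0 < a) (m : ℕ) :
    Real.Gamma a * poch a m = Real.Gamma (a + m) := by
  induction m with
  | zero => simp [poch]
  | succ n ih =>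
    rw [poch, Finset.prod_range_succ, ← poch, ← mul_assoc, ih]
    have h : a + (n : ℝ) ≠ 0 := by positivity
    rw [mul_comm, ← Real.Gamma_add_one h]
    push_cast
    ring_nf

lemma Gamma_j_half (j : ℕ) :
    Real.Gamma ((j : ℝ) + 1/2) * (4 ^ j * (j.factorial : ℝ)) =
      Real.sqrt π * ((2 * j).factorial : ℝ) := by
  induction j with
  | zero => simpa using Real.Gamma_one_half_eq
  | succ n ih =>
    have h : ((n : ℝ) + 1/2) ≠ 0 := by positivity
    have : ((n : ℕ) + 1 : ℝ) + 1/2 = ((n : ℝ) + 1/2) + 1 := by push_cast; ring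
    rw [show ((n + 1 : ℕ) : ℝ) + 1/2 = ((n : ℝ) + 1/2) + 1 by push_cast; ring,
      Real.Gamma_add_one h]
    have h2 : 2 * (n + 1) = (2 * n + 1) + 1 := by ring
    rw [h2, Nat.factorial_succ, Nat.factorial_succ, Nat.factorial_succ]
    push_cast
    linear_combination ((2*(n:ℝ)+1)*(2*(n:ℝ)+2)) * ih


lemma betaIntegrable {p q : ℝ} (hp : 0 < p) (hq : 0 < q) :
    IntegrableOn (fun y : ℝ => y ^ (p - 1) * (1 - y) ^ (q - 1)) (Ioo (0:ℝ) 1) := by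
  have h := (Complex.betaIntegral_convergent (u := (p:ℂ)) (v := (q:ℂ))
    (by simpa using hp) (by simpa using hq)).norm
  rw [intervalIntegrable_iff_integrableOn_Ioo_of_le zero_le_one] at h
  refine h.congr_fun ?_ measurableSet_Ioo
  intro x hx
  obtain ⟨h0, h1⟩ := hx
  simp only [norm_mul]
  rw [show (1 - (x:ℂ)) = ((1 - x : ℝ) : ℂ) by push_cast; ring]
  rw [Complex.norm_cpow_eq_rpow_re_of_pos h0, Complex.norm_cpow_eq_rpow_re_of_pos (by linarith)]
  push_cast
  simp

lemma betaReal {p q : ℝ} (hp : 0 < p) (hq : 0 < q) :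
    ∫ y in Ioo (0:ℝ) 1, y ^ (p - 1) * (1 - y) ^ (q - 1) =
      Real.Gamma p * Real.Gamma q / Real.Gamma (p + q) := by
  have h := Complex.Gamma_mul_Gamma_eq_betaIntegral
    (s := (p:ℂ)) (t := (q:ℂ)) (by simpa using hp) (by simpa using hq)
  have hB : Complex.betaIntegral p q =
      ((∫ y in (0:ℝ)..1, y ^ (p - 1) * (1 - y) ^ (q - 1) : ℝ) : ℂ) := by
    rw [Complex.betaIntegral, ← intervalIntegral.integral_ofReal]
    refine intervalIntegral.integral_congr fun x hx => ?_
    rw [Set.uIcc_of_le zero_le_one] at hx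
    obtain ⟨h0, h1⟩ := hx
    rw [Complex.ofReal_mul, Complex.ofReal_cpow h0, Complex.ofReal_cpow (by linarith : (0:ℝ) ≤ 1 - x)]
    push_cast
    ring
  rw [hB, Complex.Gamma_ofReal, Complex.Gamma_ofReal, ← Complex.ofReal_add,
    Complex.Gamma_ofReal] at h
  have h2 : Real.Gamma p * Real.Gamma q =
      Real.Gamma (p + q) * ∫ y in (0:ℝ)..1, y ^ (p - 1) * (1 - y) ^ (q - 1) := by
    exact_mod_cast h
  have hpq : Real.Gamma (p + q) ≠ 0 := (Real.Gamma_pos_of_pos (by linarith)).ne'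
  rw [← integral_Ioc_eq_integral_Ioo, ← intervalIntegral.integral_of_le zero_le_one,
    h2, mul_comm, mul_div_assoc, div_self hpq, mul_one]


lemma wContOn {q : ℝ} : ContinuousOn (fun u : ℝ => (1 - u^2) ^ (q-1)) (Ioo (-1:ℝ) 1) := by
  intro u hu
  obtain ⟨h0, h1⟩ := hu
  have hb : (1 : ℝ) - u^2 ≠ 0 := by nlinarith
  exact (((continuous_const.sub (continuous_pow 2)).continuousAt).rpow_const
    (Or.inl hb)).continuousWithinAt

lemma moment_half {q : ℝ} (hq : 0 < q) (j : ℕ) :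
    ∫ u in Ioo (0:ℝ) 1, 2 * u ^ (2*j) * (1 - u^2) ^ (q-1) =
      Real.Gamma ((j:ℝ) + 1/2) * Real.Gamma q / Real.Gamma ((j:ℝ) + 1/2 + q) := by
  have himg : (fun u : ℝ => u^2) '' (Ioo (0:ℝ) 1) = Ioo (0:ℝ) 1 := by
    ext t
    constructor
    · rintro ⟨u, ⟨h0, h1⟩, rfl⟩
      have := mul_lt_mul_of_pos_left h1 h0
      constructor
      · show (0:ℝ) < u^2; positivity
      · show u^2 < (1:ℝ); nlinarith
    · rintro ⟨h0, h1⟩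
      exact ⟨Real.sqrt t, ⟨Real.sqrt_pos.mpr h0,
        (Real.sqrt_lt' one_pos).mpr (by nlinarith)⟩, Real.sq_sqrt h0.le⟩
  have hderiv : ∀ u ∈ Ioo (0:ℝ) 1, HasDerivWithinAt (fun u : ℝ => u^2) (2*u) (Ioo (0:ℝ) 1) u := by
    intro u _
    simpa using (hasDerivAt_pow 2 u).hasDerivWithinAt
  have hinj : Set.InjOn (fun u : ℝ => u^2) (Ioo (0:ℝ) 1) := by
    intro a ha b hb h
    simp only at h
    nlinarith [ha.1, hb.1]
  have key := MeasureTheory.integral_image_eq_integral_abs_deriv_smul measurableSet_Ioo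
    hderiv hinj (fun t : ℝ => t ^ (((j:ℝ) + 1/2) - 1) * (1 - t) ^ (q - 1))
  rw [himg, betaReal (by positivity) hq] at key
  rw [key]
  refine setIntegral_congr_fun measurableSet_Ioo fun u hu => ?_
  obtain ⟨h0, h1⟩ := hu
  have habs : |2 * u| = 2 * u := abs_of_pos (by linarith)
  have hpow : (u^2 : ℝ) ^ (((j:ℝ) + 1/2) - 1) = u ^ ((2*j : ℝ) - 1) := by
    rw [← Real.rpow_natCast u 2, ← Real.rpow_mul h0.le]
    norm_num
    ring_nf
  have hmul : u * u ^ ((2*j:ℝ) - 1) = u ^ (2*j : ℕ) := by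
    rw [← Real.rpow_natCast u (2*j)]
    nth_rewrite 1 [← Real.rpow_one u]
    rw [← Real.rpow_add h0]
    norm_num
  rw [smul_eq_mul, habs, hpow, ← hmul]
  ring

lemma w_int {q : ℝ} (hq0 : 0 < q) (hq1 : q ≤ 1) :
    IntegrableOn (fun u : ℝ => (1 - u^2) ^ (q-1)) (Ioo (-1:ℝ) 1) := by
  have hg : IntegrableOn (fun y : ℝ => (1-y)^(q-1)) (Ioo (0:ℝ) 1) := by
    simpa using betaIntegrable one_pos hq0
  have h01 : IntegrableOn (fun u : ℝ => (1 - u^2) ^ (q-1)) (Ioo (0:ℝ) 1) := by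
    refine Integrable.mono' hg ((wContOn.mono ?_).aestronglyMeasurable measurableSet_Ioo) ?_
    · exact fun x hx => ⟨by linarith [hx.1], hx.2⟩
    · filter_upwards [ae_restrict_mem measurableSet_Ioo] with u hu
      obtain ⟨h0, h1⟩ := hu
      rw [Real.norm_of_nonneg (Real.rpow_nonneg (by nlinarith) _)]
      have : (1 : ℝ) - u^2 = (1-u) * (1+u) := by ring
      rw [this, Real.mul_rpow (by linarith) (by linarith)]
      have h2 : (1+u) ^ (q-1) ≤ 1 :=
        Real.rpow_le_one_of_one_le_of_nonpos (by linarith) (by linarith)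
      have h3 : (0:ℝ) ≤ (1-u) ^ (q-1) := Real.rpow_nonneg (by linarith) _
      nlinarith
  have hII : IntervalIntegrable (fun u : ℝ => (1 - u^2) ^ (q-1)) volume 0 1 := by
    rwa [intervalIntegrable_iff_integrableOn_Ioo_of_le zero_le_one]
  have hneg : IntervalIntegrable (fun u : ℝ => (1 - u^2) ^ (q-1)) volume (-1) 0 := by
    have h2 := (IntervalIntegrable.iff_comp_neg).mp hII
    simp only [neg_sq, neg_zero, neg_neg] at h2 ⊢
    exact h2.symm
  have hm0 : IntegrableOn (fun u : ℝ => (1 - u^2) ^ (q-1)) (Ioo (-1:ℝ) 0) := by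
    rw [intervalIntegrable_iff_integrableOn_Ioo_of_le (by norm_num)] at hneg
    exact hneg
  have hm1 : IntegrableOn (fun u : ℝ => (1 - u^2) ^ (q-1)) (Ico (0:ℝ) 1) := by
    rwa [integrableOn_Ico_iff_integrableOn_Ioo]
  refine (hm0.union hm1).mono_set fun x hx => ?_
  rcases lt_or_ge x 0 with h | h
  · exact Or.inl ⟨hx.1, h⟩
  · exact Or.inr ⟨h, hx.2⟩

lemma moment_odd {q : ℝ} (j : ℕ) :
    ∫ u in Ioo (-1:ℝ) 1, u ^ (2*j+1) * (1 - u^2) ^ (q-1) = 0 := by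
  rw [← integral_Ioc_eq_integral_Ioo, ← intervalIntegral.integral_of_le (by norm_num : (-1:ℝ) ≤ 1)]
  have h := intervalIntegral.integral_comp_neg (a := (-1:ℝ)) (b := 1)
    (f := fun u : ℝ => u ^ (2*j+1) * (1 - u^2) ^ (q-1))
  simp only [neg_neg] at h
  have h2 : ∀ x : ℝ, (-x) ^ (2*j+1) * (1 - (-x)^2) ^ (q-1) =
      -(x ^ (2*j+1) * (1 - x^2) ^ (q-1)) := by
    intro x
    rw [Odd.neg_pow ⟨j, by ring⟩, neg_sq]
    ring
  simp only [h2, intervalIntegral.integral_neg] at h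
  linarith

lemma moment_even {q : ℝ} (hq0 : 0 < q) (hq1 : q ≤ 1) (j : ℕ) :
    ∫ u in Ioo (-1:ℝ) 1, u ^ (2*j) * (1 - u^2) ^ (q-1) =
      Real.Gamma ((j:ℝ) + 1/2) * Real.Gamma q / Real.Gamma ((j:ℝ) + 1/2 + q) := by
  have hint : IntegrableOn (fun u : ℝ => u ^ (2*j) * (1 - u^2) ^ (q-1)) (Ioo (-1:ℝ) 1) := by
    refine Integrable.mono' (w_int hq0 hq1)
      ((((continuous_pow (2*j)).continuousOn).mul wContOn).aestronglyMeasurable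
        measurableSet_Ioo) ?_
    filter_upwards [ae_restrict_mem measurableSet_Ioo] with u hu
    obtain ⟨h0, h1⟩ := hu
    rw [Real.norm_eq_abs, abs_mul, abs_pow]
    have h2 : |u| ^ (2*j) ≤ 1 := pow_le_one₀ (abs_nonneg u) (abs_le.mpr ⟨h0.le, h1.le⟩)
    have h3 : |(1 - u^2) ^ (q-1)| = (1 - u^2) ^ (q-1) :=
      abs_of_nonneg (Real.rpow_nonneg (by nlinarith) _)
    rw [h3]
    nlinarith [Real.rpow_nonneg (show (0:ℝ) ≤ 1 - u^2 by nlinarith) (q-1)]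
  have hIIa : IntervalIntegrable (fun u : ℝ => u ^ (2*j) * (1 - u^2) ^ (q-1)) volume (-1) 0 := by
    rw [intervalIntegrable_iff_integrableOn_Ioo_of_le (by norm_num)]
    exact hint.mono_set fun x hx => ⟨hx.1, by linarith [hx.2]⟩
  have hIIb : IntervalIntegrable (fun u : ℝ => u ^ (2*j) * (1 - u^2) ^ (q-1)) volume 0 1 := by
    rw [intervalIntegrable_iff_integrableOn_Ioo_of_le (by norm_num)]
    exact hint.mono_set fun x hx => ⟨by linarith [hx.1], hx.2⟩
  rw [← integral_Ioc_eq_integral_Ioo, ← intervalIntegral.integral_of_le (by norm_num : (-1:ℝ) ≤ 1)]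
  rw [← intervalIntegral.integral_add_adjacent_intervals hIIa hIIb]
  have hrefl : ∫ u in (-1:ℝ)..0, u ^ (2*j) * (1 - u^2) ^ (q-1) =
      ∫ u in (0:ℝ)..1, u ^ (2*j) * (1 - u^2) ^ (q-1) := by
    have h := intervalIntegral.integral_comp_neg (a := (0:ℝ)) (b := 1)
      (f := fun u : ℝ => u ^ (2*j) * (1 - u^2) ^ (q-1))
    simp only [neg_zero] at h
    rw [← h]
    refine intervalIntegral.integral_congr fun x _ => ?_
    rw [Even.neg_pow (even_two_mul j), neg_sq]
  rw [hrefl, ← two_mul, ← moment_half hq0 j]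
  rw [intervalIntegral.integral_of_le zero_le_one, integral_Ioc_eq_integral_Ioo,
    ← MeasureTheory.integral_const_mul]
  refine setIntegral_congr_fun measurableSet_Ioo fun u _ => ?_
  ring
lemma exp_tsum (x : ℝ) : Real.exp x = ∑' n : ℕ, x ^ n / n.factorial := by
  rw [Real.exp_eq_exp_ℝ, NormedSpace.exp_eq_tsum_div]

lemma poisson_sum {q : ℝ} (hq0 : 0 < q) (hq1 : q ≤ 1) (s : ℝ) :
    ∫ u in Ioo (-1:ℝ) 1, Real.exp (s * u) * (1 - u^2) ^ (q-1) =
      ∑' j : ℕ, s ^ (2*j) / ((2*j).factorial : ℝ) *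
        (Real.Gamma ((j:ℝ) + 1/2) * Real.Gamma q / Real.Gamma ((j:ℝ) + 1/2 + q)) := by
  set μ := volume.restrict (Ioo (-1:ℝ) 1) with hμ
  set F : ℕ → ℝ → ℝ := fun n u => s ^ n / (n.factorial : ℝ) * (u ^ n * (1 - u^2) ^ (q-1))
    with hF
  have hWint : Integrable (fun u : ℝ => (1 - u^2) ^ (q-1)) μ := w_int hq0 hq1
  have hFcont : ∀ n, ContinuousOn (F n) (Ioo (-1:ℝ) 1) := fun n =>
    continuousOn_const.mul ((continuous_pow n).continuousOn.mul wContOn)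
  have hFbound : ∀ n, ∀ u ∈ Ioo (-1:ℝ) 1,
      ‖F n u‖ ≤ |s| ^ n / (n.factorial : ℝ) * (1 - u^2) ^ (q-1) := by
    intro n u hu
    obtain ⟨h0, h1⟩ := hu
    have hw0 : (0:ℝ) ≤ (1 - u^2) ^ (q-1) := Real.rpow_nonneg (by nlinarith) _
    rw [hF]
    simp only [Real.norm_eq_abs, abs_mul, abs_div, abs_pow, Nat.abs_cast]
    have h2 : |u| ^ n ≤ 1 := pow_le_one₀ (abs_nonneg u) (abs_le.mpr ⟨h0.le, h1.le⟩)
    rw [abs_of_nonneg hw0]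
    have h3 : (0:ℝ) ≤ |s| ^ n / (n.factorial : ℝ) := by positivity
    calc |s| ^ n / (n.factorial : ℝ) * (|u| ^ n * (1 - u^2) ^ (q-1))
        ≤ |s| ^ n / (n.factorial : ℝ) * (1 * (1 - u^2) ^ (q-1)) :=
          mul_le_mul_of_nonneg_left (mul_le_mul_of_nonneg_right h2 hw0) h3
      _ = |s| ^ n / (n.factorial : ℝ) * (1 - u^2) ^ (q-1) := by ring
  have hFint : ∀ n, Integrable (F n) μ := by
    intro n
    refine Integrable.mono' (hWint.const_mul (|s| ^ n / (n.factorial : ℝ)))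
      ((hFcont n).aestronglyMeasurable measurableSet_Ioo) ?_
    filter_upwards [ae_restrict_mem measurableSet_Ioo] with u hu
    exact hFbound n u hu
  have hnorm : ∀ n, ∫ u, ‖F n u‖ ∂μ ≤
      |s| ^ n / (n.factorial : ℝ) * ∫ u, (1 - u^2) ^ (q-1) ∂μ := by
    intro n
    calc ∫ u, ‖F n u‖ ∂μ
        ≤ ∫ u, |s| ^ n / (n.factorial : ℝ) * (1 - u^2) ^ (q-1) ∂μ := by
          refine integral_mono_ae (hFint n).norm (hWint.const_mul _) ?_
          filter_upwards [ae_restrict_mem measurableSet_Ioo] with u hu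
          exact hFbound n u hu
      _ = |s| ^ n / (n.factorial : ℝ) * ∫ u, (1 - u^2) ^ (q-1) ∂μ := by
          rw [MeasureTheory.integral_const_mul]
  have hsum : Summable (fun n => ∫ u, ‖F n u‖ ∂μ) :=
    Summable.of_nonneg_of_le (fun n => integral_nonneg fun u => norm_nonneg _) hnorm
      ((Real.summable_pow_div_factorial |s|).mul_right _)
  have hswap := MeasureTheory.integral_tsum_of_summable_integral_norm hFint hsum
  have hptw : ∀ u : ℝ, Real.exp (s * u) * (1 - u^2) ^ (q-1) = ∑' n, F n u := by
    intro u
    rw [exp_tsum (s * u), ← tsum_mul_right]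
    refine tsum_congr fun n => ?_
    rw [hF, mul_pow]
    ring
  have ha : Summable (fun n => ∫ u, F n u ∂μ) :=
    Summable.of_norm_bounded hsum fun n => norm_integral_le_integral_norm _
  have he : Summable (fun j : ℕ => ∫ u, F (2*j) u ∂μ) :=
    ha.comp_injective fun a b hab => by omega
  have ho : Summable (fun j : ℕ => ∫ u, F (2*j+1) u ∂μ) :=
    ha.comp_injective fun a b hab => by omega
  calc ∫ u, Real.exp (s * u) * (1 - u^2) ^ (q-1) ∂μ
      = ∫ u, ∑' n, F n u ∂μ := integral_congr_ae (Eventually.of_forall hptw)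
    _ = ∑' n, ∫ u, F n u ∂μ := hswap.symm
    _ = (∑' j : ℕ, ∫ u, F (2*j) u ∂μ) + ∑' j : ℕ, ∫ u, F (2*j+1) u ∂μ :=
        (tsum_even_add_odd he ho).symm
    _ = (∑' j : ℕ, ∫ u, F (2*j) u ∂μ) + 0 := by
        congr 1
        rw [← tsum_zero]
        refine tsum_congr fun j => ?_
        rw [hF]
        simp only
        rw [MeasureTheory.integral_const_mul, hμ, moment_odd, mul_zero]
    _ = ∑' j : ℕ, s ^ (2*j) / ((2*j).factorial : ℝ) *
        (Real.Gamma ((j:ℝ) + 1/2) * Real.Gamma q / Real.Gamma ((j:ℝ) + 1/2 + q)) := by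
        rw [add_zero]
        refine tsum_congr fun j => ?_
        rw [hF]
        simp only
        rw [MeasureTheory.integral_const_mul, hμ, moment_even hq0 hq1]
lemma gContOn {b : ℝ} : ContinuousOn (fun y : ℝ => y * (1 - y) ^ (b-3)) (Ioo (0:ℝ) 1) := by
  refine continuous_id.continuousOn.mul fun y hy => ?_
  obtain ⟨h0, h1⟩ := hy
  refine (((continuous_const.sub continuous_id).continuousAt).rpow_const ?_).continuousWithinAt
  left
  simp only [Pi.sub_apply, id_eq]
  intro h
  have : y = 1 := by linarith [sub_eq_zero.mp h]
  linarith
lemma g_integrable {b : ℝ} (hb : 2 < b) :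
    IntegrableOn (fun y : ℝ => y * (1 - y) ^ (b-3)) (Ioo (0:ℝ) 1) := by
  refine (betaIntegrable (p := 2) (q := b-2) two_pos (by linarith)).congr_fun
    (fun x hx => ?_) measurableSet_Ioo
  rw [show (2:ℝ)-1 = 1 by norm_num, show b-2-1 = b-3 by ring]; simp only [Real.rpow_one]
lemma euler_sum {b : ℝ} (hb : 2 < b) (z : ℝ) :
    ∫ y in Ioo (0:ℝ) 1, Real.exp (z * y) * y * (1 - y) ^ (b-3) =
      ∑' m : ℕ, z ^ m / (m.factorial : ℝ) *
        (Real.Gamma ((m:ℝ) + 2) * Real.Gamma (b-2) / Real.Gamma (b + m)) := by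
  set μ := volume.restrict (Ioo (0:ℝ) 1) with hμ
  set G : ℕ → ℝ → ℝ := fun m y => z ^ m / (m.factorial : ℝ) * (y ^ m * (y * (1 - y) ^ (b-3)))
    with hG
  have hgint : Integrable (fun y : ℝ => y * (1 - y) ^ (b-3)) μ := g_integrable hb
  have hGcont : ∀ m, ContinuousOn (G m) (Ioo (0:ℝ) 1) := fun m =>
    continuousOn_const.mul ((continuous_pow m).continuousOn.mul gContOn)
  have hGbound : ∀ m, ∀ y ∈ Ioo (0:ℝ) 1,
      ‖G m y‖ ≤ |z| ^ m / (m.factorial : ℝ) * (y * (1 - y) ^ (b-3)) := by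
    intro m y hy
    obtain ⟨h0, h1⟩ := hy
    have hw0 : (0:ℝ) ≤ (1 - y) ^ (b-3) := Real.rpow_nonneg (by linarith) _
    have hg0 : (0:ℝ) ≤ y * (1 - y) ^ (b-3) := by positivity
    rw [hG]
    simp only [Real.norm_eq_abs, abs_mul, abs_div, abs_pow, Nat.abs_cast]
    have h2 : |y| ^ m ≤ 1 := pow_le_one₀ (abs_nonneg y) (abs_le.mpr ⟨by linarith, h1.le⟩)
    rw [abs_of_nonneg h0.le, abs_of_nonneg hw0]
    have h3 : (0:ℝ) ≤ |z| ^ m / (m.factorial : ℝ) := by positivity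
    calc |z| ^ m / (m.factorial : ℝ) * (y ^ m * (y * (1 - y) ^ (b-3)))
        ≤ |z| ^ m / (m.factorial : ℝ) * (1 * (y * (1 - y) ^ (b-3))) :=
          mul_le_mul_of_nonneg_left
            (mul_le_mul_of_nonneg_right (pow_le_one₀ h0.le h1.le) hg0) h3
      _ = |z| ^ m / (m.factorial : ℝ) * (y * (1 - y) ^ (b-3)) := by ring
  have hGint : ∀ m, Integrable (G m) μ := by
    intro m
    refine Integrable.mono' (hgint.const_mul (|z| ^ m / (m.factorial : ℝ)))
      ((hGcont m).aestronglyMeasurable measurableSet_Ioo) ?_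
    filter_upwards [ae_restrict_mem measurableSet_Ioo] with y hy
    exact hGbound m y hy
  have hnorm : ∀ m, ∫ y, ‖G m y‖ ∂μ ≤
      |z| ^ m / (m.factorial : ℝ) * ∫ y, y * (1 - y) ^ (b-3) ∂μ := by
    intro m
    calc ∫ y, ‖G m y‖ ∂μ
        ≤ ∫ y, |z| ^ m / (m.factorial : ℝ) * (y * (1 - y) ^ (b-3)) ∂μ := by
          refine integral_mono_ae (hGint m).norm (hgint.const_mul _) ?_
          filter_upwards [ae_restrict_mem measurableSet_Ioo] with y hy
          exact hGbound m y hy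
      _ = |z| ^ m / (m.factorial : ℝ) * ∫ y, y * (1 - y) ^ (b-3) ∂μ := by
          rw [MeasureTheory.integral_const_mul]
  have hsum : Summable (fun m => ∫ y, ‖G m y‖ ∂μ) :=
    Summable.of_nonneg_of_le (fun m => integral_nonneg fun y => norm_nonneg _) hnorm
      ((Real.summable_pow_div_factorial |z|).mul_right _)
  have hswap := MeasureTheory.integral_tsum_of_summable_integral_norm hGint hsum
  have hptw : ∀ y : ℝ, Real.exp (z * y) * y * (1 - y) ^ (b-3) = ∑' m, G m y := by
    intro y
    rw [mul_assoc, exp_tsum (z * y), ← tsum_mul_right]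
    refine tsum_congr fun m => ?_
    rw [hG, mul_pow]
    ring
  have hval : ∀ m : ℕ, ∫ y, G m y ∂μ = z ^ m / (m.factorial : ℝ) *
      (Real.Gamma ((m:ℝ) + 2) * Real.Gamma (b-2) / Real.Gamma (b + m)) := by
    intro m
    rw [hG]
    simp only
    rw [MeasureTheory.integral_const_mul]
    congr 1
    have hβ := betaReal (p := (m:ℝ) + 2) (q := b - 2) (by positivity) (by linarith)
    rw [show ((m:ℝ) + 2) + (b - 2) = b + m by ring] at hβ
    rw [← hβ, hμ]
    refine setIntegral_congr_fun measurableSet_Ioo fun y hy => ?_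
    obtain ⟨h0, h1⟩ := hy
    rw [show ((m:ℝ) + 2) - 1 = ((m+1 : ℕ) : ℝ) by push_cast; ring, Real.rpow_natCast,
      show b - 2 - 1 = b - 3 by ring, pow_succ]
    ring
  calc ∫ y, Real.exp (z * y) * y * (1 - y) ^ (b-3) ∂μ
      = ∫ y, ∑' m, G m y ∂μ := integral_congr_ae (Eventually.of_forall hptw)
    _ = ∑' m, ∫ y, G m y ∂μ := hswap.symm
    _ = ∑' m : ℕ, z ^ m / (m.factorial : ℝ) *
        (Real.Gamma ((m:ℝ) + 2) * Real.Gamma (b-2) / Real.Gamma (b + m)) :=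
        tsum_congr hval
lemma iBessel_neg (κ x : ℝ) : iBessel κ (-x) = iBessel κ x :=
  tsum_congr fun j => by rw [neg_div, Even.neg_pow (even_two_mul j)]

lemma euler {b : ℝ} (hb : 2 < b) (z : ℝ) :
    F11 2 b z = Real.Gamma b / Real.Gamma (b-2) *
      ∫ y in Ioo (0:ℝ) 1, Real.exp (z * y) * y * (1 - y) ^ (b-3) := by
  rw [F11, euler_sum hb z, ← tsum_mul_left]
  refine tsum_congr fun m => ?_
  have hb0 : (0:ℝ) < b := by linarith
  have hA : Real.Gamma b ≠ 0 := (Real.Gamma_pos_of_pos hb0).ne'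
  have hB : Real.Gamma (b-2) ≠ 0 := (Real.Gamma_pos_of_pos (by linarith)).ne'
  have hC : Real.Gamma (b + m) ≠ 0 := (Real.Gamma_pos_of_pos (by positivity)).ne'
  have hfm : (m.factorial : ℝ) ≠ 0 := Nat.cast_ne_zero.mpr m.factorial_ne_zero
  have hpoch : poch b m = Real.Gamma (b + m) / Real.Gamma b := by
    rw [eq_div_iff hA, mul_comm, Gamma_mul_poch hb0]
  have hΓm2 : Real.Gamma ((m:ℝ) + 2) = ((m+1).factorial : ℝ) := by
    rw [show ((m:ℝ) + 2) = ((m+1 : ℕ) : ℝ) + 1 by push_cast; ring,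
      Real.Gamma_nat_eq_factorial]
  rw [poch_two, hpoch, hΓm2]
  field_simp

lemma poisson_iBessel {ν : ℝ} (hν1 : 1/4 < ν) (hν2 : ν ≤ 1/2) (s : ℝ) :
    ∫ u in Ioo (-1:ℝ) 1, Real.exp (s * u) * (1 - u^2) ^ (ν - 1/2) =
      Real.sqrt π * Real.Gamma (ν + 1/2) / Real.Gamma (ν + 1) * iBessel ν s := by
  have h := poisson_sum (q := ν + 1/2) (by linarith) (by linarith) s
  rw [show ν + 1/2 - 1 = ν - 1/2 by ring] at h
  rw [h, iBessel, ← tsum_mul_left]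
  refine tsum_congr fun j => ?_
  rw [show (j:ℝ) + 1/2 + (ν + 1/2) = ν + (j:ℝ) + 1 by ring]
  have hj := Gamma_j_half j
  have h4 : ((4:ℝ)) ^ j ≠ 0 := by positivity
  have hjf : ((j.factorial : ℝ)) ≠ 0 := Nat.cast_ne_zero.mpr j.factorial_ne_zero
  have h2jf : (((2*j).factorial : ℝ)) ≠ 0 := Nat.cast_ne_zero.mpr (2*j).factorial_ne_zero
  have hΓ1 : Real.Gamma (ν + 1) ≠ 0 := (Real.Gamma_pos_of_pos (by linarith)).ne'
  have hΓ2 : Real.Gamma (ν + (j:ℝ) + 1) ≠ 0 := (Real.Gamma_pos_of_pos (by positivity)).ne'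
  have hjh : Real.Gamma ((j:ℝ) + 1/2) = Real.sqrt π * ((2*j).factorial : ℝ) /
      (4 ^ j * (j.factorial : ℝ)) := by
    rw [eq_div_iff (by positivity)]
    exact hj
  have hpow : (s/2) ^ (2*j) = s ^ (2*j) / 4 ^ j := by
    rw [pow_mul, pow_mul, ← div_pow]
    congr 1
    ring
  rw [hjh, hpow]
  field_simp
theorem confluent_beta_integral (ν c v : ℝ) (hν : ν ∈ Set.Ioc (1/4 : ℝ) (1/2 : ℝ))
    (hc : c ∈ Set.Ioo (0 : ℝ) 1) (hv : 0 < v) :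
    (∫ u in (-1:ℝ)..1, F11 2 (2 * ν + 3/2) (v * (1 - c * u) / 2) *
        (Real.Gamma (ν + 1) / (Real.sqrt π * Real.Gamma (ν + 1/2)) *
          (1 - u ^ 2) ^ (ν - 1/2))) =
      Real.Gamma (2 * ν + 3/2) / Real.Gamma (2 * ν - 1/2) *
        ∫ y in (0:ℝ)..1, Real.exp (v * y / 2) * iBessel ν (v * c * y / 2) *
          y * (1 - y) ^ (2 * ν - 3/2) := by
  obtain ⟨hν1, hν2⟩ := hν
  obtain ⟨hc0, hc1⟩ := hc
  have hb : (2:ℝ) < 2*ν + 3/2 := by linarith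
  set K : ℝ := Real.Gamma (2*ν + 3/2) / Real.Gamma (2*ν - 1/2) with hK
  set C : ℝ := Real.Gamma (ν + 1) / (Real.sqrt π * Real.Gamma (ν + 1/2)) with hC
  set P : ℝ := Real.sqrt π * Real.Gamma (ν + 1/2) / Real.Gamma (ν + 1) with hP
  set W : ℝ → ℝ := fun u => (1 - u^2) ^ (ν - 1/2) with hW
  set E : ℝ → ℝ → ℝ :=
    fun u y => Real.exp (v * (1 - c*u) / 2 * y) * y * (1 - y) ^ (2*ν - 3/2) with hE
  -- Euler representation pointwise in u
  have heuler : ∀ u : ℝ, F11 2 (2*ν + 3/2) (v * (1 - c*u) / 2) =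
      K * ∫ y in Ioo (0:ℝ) 1, E u y := by
    intro u
    have h := euler hb (v * (1 - c*u) / 2)
    rw [show 2*ν + 3/2 - 2 = 2*ν - 1/2 by ring, show 2*ν + 3/2 - 3 = 2*ν - 3/2 by ring] at h
    exact h
  -- integrability of weights
  have hWint : Integrable W (volume.restrict (Ioo (-1:ℝ) 1)) := by
    have h := w_int (q := ν + 1/2) (by linarith) (by linarith)
    rwa [show ν + 1/2 - 1 = ν - 1/2 by ring] at h
  have hgint : Integrable (fun y : ℝ => y * (1 - y) ^ (2*ν - 3/2))
      (volume.restrict (Ioo (0:ℝ) 1)) := by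
    have h := g_integrable hb
    rwa [show 2*ν + 3/2 - 3 = 2*ν - 3/2 by ring] at h
  -- Fubini integrability
  have hInt : Integrable (Function.uncurry fun u y => E u y * W u)
      ((volume.restrict (Ioo (-1:ℝ) 1)).prod (volume.restrict (Ioo (0:ℝ) 1))) := by
    rw [Measure.prod_restrict]
    have hSm : MeasurableSet ((Ioo (-1:ℝ) 1) ×ˢ (Ioo (0:ℝ) 1)) :=
      measurableSet_Ioo.prod measurableSet_Ioo
    have hcontexp : Continuous fun p : ℝ × ℝ => Real.exp (v * (1 - c*p.1) / 2 * p.2) := by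
      fun_prop
    have hcont : ContinuousOn (Function.uncurry fun u y => E u y * W u)
        ((Ioo (-1:ℝ) 1) ×ˢ (Ioo (0:ℝ) 1)) := by
      intro p hp
      obtain ⟨hp1, hp2⟩ := hp
      have h3 : ContinuousAt (fun p : ℝ × ℝ => (1 - p.2) ^ (2*ν - 3/2)) p := by
        refine ((continuous_const.sub continuous_snd).continuousAt).rpow_const (Or.inl ?_)
        have := hp2.2; intro hcon; simp only [Pi.sub_apply, sub_eq_zero] at hcon; linarith [hcon ▸ this]
      have h4 : ContinuousAt (fun p : ℝ × ℝ => (1 - p.1^2) ^ (ν - 1/2)) p := by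
        refine ((continuous_const.sub ((continuous_pow 2).comp
          continuous_fst)).continuousAt).rpow_const (Or.inl ?_)
        have h1 := hp1.1; have h2 := hp1.2
        simp only [Pi.sub_apply, Function.comp_apply]
        nlinarith
      exact (((hcontexp.continuousAt.mul continuous_snd.continuousAt).mul h3).mul
        h4).continuousWithinAt
    refine Integrable.mono'
      (g := fun p : ℝ × ℝ => W p.1 * (Real.exp v * (p.2 * (1 - p.2) ^ (2*ν - 3/2)))) ?_
      (hcont.aestronglyMeasurable hSm) ?_
    · rw [← Measure.prod_restrict]
      exact Integrable.mul_prod hWint (hgint.const_mul (Real.exp v))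
    · filter_upwards [ae_restrict_mem hSm] with p hp
      obtain ⟨⟨hu0, hu1⟩, ⟨hy0, hy1⟩⟩ := hp
      set u := p.1; set y := p.2
      have hWnn : (0:ℝ) ≤ W u := Real.rpow_nonneg (by nlinarith) _
      have hpnn : (0:ℝ) ≤ (1 - y) ^ (2*ν - 3/2) := Real.rpow_nonneg (by linarith) _
      have hexple : Real.exp (v * (1 - c*u) / 2 * y) ≤ Real.exp v := by
        apply Real.exp_le_exp.mpr
        have h1 : (0:ℝ) < 1 - c*u := by nlinarith
        have h4 : (1 - c*u) * y < 2 := by nlinarith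
        nlinarith [mul_lt_mul_of_pos_left h4 hv]
      have hnn : (0:ℝ) ≤ E u y * W u := by
        simp only [hE, hW]
        have := (Real.exp_pos (v * (1 - c*u) / 2 * y)).le
        positivity
      rw [Function.uncurry, Real.norm_of_nonneg hnn, hE, hW]
      calc Real.exp (v * (1 - c*u) / 2 * y) * y * (1 - y) ^ (2*ν - 3/2) * (1 - u^2) ^ (ν - 1/2)
          ≤ Real.exp v * y * (1 - y) ^ (2*ν - 3/2) * (1 - u^2) ^ (ν - 1/2) := by
            have hr : (0:ℝ) ≤ y * (1 - y) ^ (2*ν - 3/2) * (1 - u^2) ^ (ν - 1/2) := by positivity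
            nlinarith [mul_le_mul_of_nonneg_right hexple hr]
        _ = (1 - u^2) ^ (ν - 1/2) * (Real.exp v * (y * (1 - y) ^ (2*ν - 3/2))) := by ring
  -- the key computation
  have hinner : ∀ y : ℝ, (∫ u in Ioo (-1:ℝ) 1, E u y * W u) =
      P * (Real.exp (v * y / 2) * iBessel ν (v * c * y / 2) * y * (1 - y) ^ (2*ν - 3/2)) := by
    intro y
    have hsplit : ∀ u : ℝ, E u y * W u =
        (Real.exp (v * y / 2) * y * (1 - y) ^ (2*ν - 3/2)) *
          (Real.exp (-(v * c * y / 2) * u) * W u) := by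
      intro u
      simp only [hE]
      have : v * (1 - c*u) / 2 * y = v * y / 2 + -(v * c * y / 2) * u := by ring
      rw [this, Real.exp_add]
      ring
    rw [setIntegral_congr_fun measurableSet_Ioo fun u _ => hsplit u, MeasureTheory.integral_const_mul,
      poisson_iBessel hν1 hν2, show -(v * c * y / 2) = -(v * c * y / 2) from rfl,
      iBessel_neg]
    rw [hP]
    ring
  -- assemble
  rw [intervalIntegral.integral_of_le (by norm_num : (-1:ℝ) ≤ 1), integral_Ioc_eq_integral_Ioo,
    intervalIntegral.integral_of_le zero_le_one, integral_Ioc_eq_integral_Ioo]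
  have hCP : K * (C * P) = K := by
    rw [hC, hP]
    have h1 : Real.Gamma (ν + 1) ≠ 0 := (Real.Gamma_pos_of_pos (by linarith)).ne'
    have h2 : Real.Gamma (ν + 1/2) ≠ 0 := (Real.Gamma_pos_of_pos (by linarith)).ne'
    have h3 : Real.sqrt π ≠ 0 := (Real.sqrt_pos.mpr Real.pi_pos).ne'
    field_simp
  calc ∫ u in Ioo (-1:ℝ) 1, F11 2 (2*ν + 3/2) (v * (1 - c*u) / 2) * (C * W u)
      = ∫ u in Ioo (-1:ℝ) 1, (K * C) * ((∫ y in Ioo (0:ℝ) 1, E u y) * W u) := by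
        refine setIntegral_congr_fun measurableSet_Ioo fun u _ => ?_
        rw [heuler u]
        ring
    _ = (K * C) * ∫ u in Ioo (-1:ℝ) 1, (∫ y in Ioo (0:ℝ) 1, E u y) * W u := by
        rw [MeasureTheory.integral_const_mul]
    _ = (K * C) * ∫ u in Ioo (-1:ℝ) 1, ∫ y in Ioo (0:ℝ) 1, E u y * W u := by
        congr 1
        refine setIntegral_congr_fun measurableSet_Ioo fun u _ => ?_
        exact (MeasureTheory.integral_mul_const _ _).symm
    _ = (K * C) * ∫ y in Ioo (0:ℝ) 1, ∫ u in Ioo (-1:ℝ) 1, E u y * W u := by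
        rw [integral_integral_swap hInt]
    _ = (K * C) * ∫ y in Ioo (0:ℝ) 1,
          P * (Real.exp (v * y / 2) * iBessel ν (v * c * y / 2) * y * (1 - y) ^ (2*ν - 3/2)) := by
        congr 1
        exact setIntegral_congr_fun measurableSet_Ioo fun y _ => hinner y
    _ = K * ∫ y in Ioo (0:ℝ) 1,
          Real.exp (v * y / 2) * iBessel ν (v * c * y / 2) * y * (1 - y) ^ (2*ν - 3/2) := by
        rw [MeasureTheory.integral_const_mul]
        nth_rewrite 2 [← hCP]
        ring
end
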